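/- Every hinge angle α (with specified quadrant representative) is uniquely determined by its primary generating triple: distinct hinge angles have distinct primary generating triples, and each hinge angle has exactly one primary generating triple. -/
import Mathlib


open Real Complex

/-- (p,q,k) generates α with quadrant representative specified: the rotated source
point has real part k+1/2 and positive imaginary part. -/
def GenTripleQ (α : ℝ) (p q k : ℤ) : Prop :=
  ((((p : ℂ) + (q : ℂ) * Complex.I) * Complex.exp (α * Complex.I)).re = (k : ℝ) + 1 / 2) ∧
    0 < (((p : ℂ) + (q : ℂ) * Complex.I) * Complex.exp (α * Complex.I)).im

lemma gen_iff (α : ℝ) (p q k : ℤ) : GenTripleQ α p q k ↔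
    ((p : ℝ) * Real.cos α - q * Real.sin α = k + 1/2 ∧
      0 < (p : ℝ) * Real.sin α + q * Real.cos α) := by
  unfold GenTripleQ
  rw [show ((α : ℂ) * Complex.I) = (α : ℝ) * Complex.I from rfl]
  rw [Complex.exp_mul_I]
  simp [Complex.ext_iff, Complex.cos_ofReal_re, Complex.sin_ofReal_re]

lemma sq_parity (u v D : ℤ) (h : u^2 + v^2 = 4*D^2) : Even u ∧ Even v := by
  rcases Int.even_or_odd u with hu | hu
  · rcases Int.even_or_odd v with hv | hv
    · exact ⟨hu, hv⟩
    · exfalso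
      obtain ⟨a, rfl⟩ := hu; obtain ⟨b, rfl⟩ := hv
      have h' : 4*(a^2) + 4*(b^2+b) + 1 = 4*(D^2) := by linear_combination h
      omega
  · exfalso
    obtain ⟨a, rfl⟩ := hu
    rcases Int.even_or_odd v with ⟨b, rfl⟩ | ⟨b, rfl⟩
    · have h' : 4*(a^2+a) + 4*(b^2) + 1 = 4*(D^2) := by linear_combination h
      omega
    · have h' : 4*(a^2+a) + 4*(b^2+b) + 2 = 4*(D^2) := by linear_combination h
      omega

lemma descent (p q : ℤ) : ∀ n : ℕ, ∀ K u v D : ℤ, Odd K → D.natAbs ≤ n →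
    u^2 + v^2 = 4*D^2 → p*u - q*v = K*D → D = 0 := by
  intro n
  induction n with
  | zero => intro K u v D _ hle _ _; omega
  | succ n ih =>
    intro K u v D hK hle h1 h2
    by_cases hD : D = 0
    · exact hD
    obtain ⟨hu, hv⟩ := sq_parity u v D h1
    obtain ⟨u', rfl⟩ := hu
    obtain ⟨v', rfl⟩ := hv
    have h2' : 2*(p*u' - q*v') = K*D := by linear_combination h2
    have hDeven : Even D := by
      rcases Int.even_or_odd D with hE | hO
      · exact hE
      · exfalso
        obtain ⟨m, hm⟩ := hK.mul hO
        have hr : K * D = (p*u'-q*v') + (p*u'-q*v') := by linarith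
        have : (p*u'-q*v') + (p*u'-q*v') = 2*m+1 := by rw [← hr, hm]
        omega
    obtain ⟨D', rfl⟩ := hDeven
    have h4 : 4*(u'^2+v'^2) = 4*(4*D'^2) := by linear_combination h1
    have h1' : u'^2+v'^2 = 4*D'^2 := mul_left_cancel₀ (by norm_num : (4:ℤ) ≠ 0) h4
    have h2'' : p*u' - q*v' = K*D' := by linarith
    have : D' = 0 := ih K u' v' D' hK (by omega) h1' h2''
    omega

/-- a generating triple has nonzero (p,q) -/
lemma gen_pq_pos {α : ℝ} {p q k : ℤ} (h : GenTripleQ α p q k) : 0 < p^2 + q^2 := by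
  rcases (gen_iff α p q k).mp h with ⟨e1, _⟩
  by_contra hc
  have hp : p = 0 := by nlinarith [sq_nonneg p, sq_nonneg q]
  have hq : q = 0 := by nlinarith [sq_nonneg p, sq_nonneg q]
  subst hp; subst hq
  have : ((2*k+1 : ℤ) : ℝ) = 0 := by push_cast; push_cast at e1; linarith
  have : (2*k+1 : ℤ) = 0 := by exact_mod_cast this
  omega

/-- colinearity: all generating triples of the same angle are proportional. -/
lemma colinear {α : ℝ} {p q k p' q' k' : ℤ} (h : GenTripleQ α p q k)
    (h' : GenTripleQ α p' q' k') :
    p*(2*k'+1) = p'*(2*k+1) ∧ q*(2*k'+1) = q'*(2*k+1) := by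
  rcases (gen_iff α p q k).mp h with ⟨e1, _⟩
  rcases (gen_iff α p' q' k').mp h' with ⟨e1', _⟩
  have hcs : Real.sin α^2 + Real.cos α^2 = 1 := Real.sin_sq_add_cos_sq α
  have hu : ((q*(2*k'+1) - q'*(2*k+1) : ℤ) : ℝ)
      = 2*Real.cos α*((q*p' - q'*p : ℤ) : ℝ) := by
    push_cast
    linear_combination (-2*(q:ℝ))*e1' + (2*(q':ℝ))*e1
  have hv : ((p*(2*k'+1) - p'*(2*k+1) : ℤ) : ℝ)
      = 2*Real.sin α*((q*p' - q'*p : ℤ) : ℝ) := by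
    push_cast
    linear_combination (-2*(p:ℝ))*e1' + (2*(p':ℝ))*e1
  have h1R : (((q*(2*k'+1) - q'*(2*k+1) : ℤ) : ℝ))^2
      + (((p*(2*k'+1) - p'*(2*k+1) : ℤ) : ℝ))^2
      = 4*(((q*p' - q'*p : ℤ) : ℝ))^2 := by
    rw [hu, hv]
    linear_combination (4*(((q*p' - q'*p : ℤ) : ℝ))^2) * hcs
  have h1 : (q*(2*k'+1) - q'*(2*k+1))^2 + (p*(2*k'+1) - p'*(2*k+1))^2
      = 4*(q*p' - q'*p)^2 := by exact_mod_cast h1R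
  have h2R : (p:ℝ)*((q*(2*k'+1) - q'*(2*k+1) : ℤ) : ℝ)
      - (q:ℝ)*((p*(2*k'+1) - p'*(2*k+1) : ℤ) : ℝ)
      = ((2*k+1 : ℤ) : ℝ)*((q*p' - q'*p : ℤ) : ℝ) := by
    rw [hu, hv]
    push_cast
    linear_combination (2*((q:ℝ)*p' - q'*p))*e1
  have h2 : p*(q*(2*k'+1) - q'*(2*k+1)) - q*(p*(2*k'+1) - p'*(2*k+1))
      = (2*k+1)*(q*p' - q'*p) := by exact_mod_cast h2R
  have hD : q*p' - q'*p = 0 :=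
    descent p q (q*p' - q'*p).natAbs (2*k+1) _ _ _ ⟨k, by ring⟩ le_rfl h1 h2
  have hu0 : q*(2*k'+1) - q'*(2*k+1) = 0 := by
    have : ((q*(2*k'+1) - q'*(2*k+1) : ℤ) : ℝ) = 0 := by rw [hu, hD]; simp
    exact_mod_cast this
  have hv0 : p*(2*k'+1) - p'*(2*k+1) = 0 := by
    have : ((p*(2*k'+1) - p'*(2*k+1) : ℤ) : ℝ) = 0 := by rw [hv, hD]; simp
    exact_mod_cast this
  omega

/-- the "heights" are proportional with the same factor, forcing sign agreement. -/
lemma sign_agree {α : ℝ} {p q k p' q' k' : ℤ} (h : GenTripleQ α p q k)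
    (h' : GenTripleQ α p' q' k') : (0 < 2*k+1 ↔ 0 < 2*k'+1) := by
  obtain ⟨hc1, hc2⟩ := colinear h h'
  rcases (gen_iff α p q k).mp h with ⟨_, e2⟩
  rcases (gen_iff α p' q' k').mp h' with ⟨_, e2'⟩
  have key : ((2*k+1 : ℤ) : ℝ) * ((p':ℝ) * Real.sin α + q' * Real.cos α)
      = ((2*k'+1 : ℤ) : ℝ) * ((p:ℝ) * Real.sin α + q * Real.cos α) := by
    have c1 : ((p:ℝ))*((2*k'+1 : ℤ):ℝ) = (p':ℝ)*((2*k+1 : ℤ):ℝ) := by exact_mod_cast hc1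
    have c2 : ((q:ℝ))*((2*k'+1 : ℤ):ℝ) = (q':ℝ)*((2*k+1 : ℤ):ℝ) := by exact_mod_cast hc2
    linear_combination Real.sin α * c1.symm + Real.cos α * c2.symm
  constructor <;> intro hpos
  · by_contra hneg
    have h1 : ((2*k'+1 : ℤ) : ℝ) ≤ 0 := by exact_mod_cast (by omega : (2*k'+1 : ℤ) ≤ 0)
    have h2 : (0:ℝ) < ((2*k+1 : ℤ) : ℝ) := by exact_mod_cast (by omega : (0:ℤ) < 2*k+1)
    nlinarith
  · by_contra hneg
    have h1 : ((2*k+1 : ℤ) : ℝ) ≤ 0 := by exact_mod_cast (by omega : (2*k+1 : ℤ) ≤ 0)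
    have h2 : (0:ℝ) < ((2*k'+1 : ℤ) : ℝ) := by exact_mod_cast (by omega : (0:ℤ) < 2*k'+1)
    nlinarith

/-- every hinge angle has exactly one primary generating triple, and
distinct hinge angles have distinct primary generating triples. -/
theorem primary_triple_unique (α : ℝ) (hα : α ∈ Set.Ico 0 (2 * π))
    (hhinge : ∃ p q k : ℤ, GenTripleQ α p q k) :
    (∃! t : ℤ × ℤ × ℤ, GenTripleQ α t.1 t.2.1 t.2.2 ∧
        ∀ p' q' k' : ℤ, GenTripleQ α p' q' k' →
          t.1 ^ 2 + t.2.1 ^ 2 ≤ p' ^ 2 + q' ^ 2) ∧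
    (∀ α' ∈ Set.Ico 0 (2 * π), ∀ p q k : ℤ,
        GenTripleQ α p q k → GenTripleQ α' p q k → α = α') := by
  constructor
  · -- existence and uniqueness of minimal triple
    -- existence via Nat.find
    have hP : ∃ n : ℕ, ∃ p q k : ℤ, GenTripleQ α p q k ∧ p^2 + q^2 = (n : ℤ) := by
      obtain ⟨p, q, k, hg⟩ := hhinge
      exact ⟨(p^2+q^2).toNat, p, q, k, hg, by
        have := gen_pq_pos hg; omega⟩
    classical
    obtain ⟨p₀, q₀, k₀, hg₀, hn₀⟩ := Nat.find_spec hP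
    have hmin : ∀ p' q' k' : ℤ, GenTripleQ α p' q' k' →
        p₀^2 + q₀^2 ≤ p'^2 + q'^2 := by
      intro p' q' k' hg'
      have hpos := gen_pq_pos hg'
      have hle : Nat.find hP ≤ (p'^2+q'^2).toNat :=
        Nat.find_le ⟨p', q', k', hg', by omega⟩
      omega
    refine ⟨⟨p₀, q₀, k₀⟩, ⟨hg₀, hmin⟩, ?_⟩
    rintro ⟨p, q, k⟩ ⟨hg, hmin'⟩
    dsimp only at hg hmin' ⊢
    -- both minimal: equal norms
    have hle1 := hmin' p₀ q₀ k₀ hg₀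
    have hle2 := hmin p q k hg
    have heq : p^2 + q^2 = p₀^2 + q₀^2 := le_antisymm hle1 hle2
    obtain ⟨c1, c2⟩ := colinear hg hg₀
    have hsign := sign_agree hg hg₀
    have hpqpos := gen_pq_pos hg
    -- (p²+q²)(2k₀+1)² = (p₀²+q₀²)(2k+1)²
    have hKsq : (2*k₀+1)^2 = (2*k+1)^2 := by
      have e : (p^2+q^2)*(2*k₀+1)^2 = (p₀^2+q₀^2)*(2*k+1)^2 := by
        linear_combination (p*(2*k₀+1)+p₀*(2*k+1))*c1 + (q*(2*k₀+1)+q₀*(2*k+1))*c2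
      rw [heq] at e
      have hne : p₀^2 + q₀^2 ≠ 0 := by have := gen_pq_pos hg₀; omega
      exact mul_left_cancel₀ hne (by linarith)
    have hK : 2*k₀+1 = 2*k+1 := by
      have hfac : (2*k₀+1 - (2*k+1))*(2*k₀+1 + (2*k+1)) = 0 := by linear_combination hKsq
      rcases mul_eq_zero.mp hfac with h | h
      · omega
      · omega
    have hk : k = k₀ := by omega
    have hKne : (2*k+1) ≠ 0 := by omega
    rw [hK] at c1 c2
    have hp : p = p₀ := mul_right_cancel₀ hKne c1
    have hq : q = q₀ := mul_right_cancel₀ hKne c2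
    simp [Prod.ext_iff, hp, hq, hk]
  · -- angle uniqueness
    rintro α' ⟨hα'0, hα'2⟩ p q k hg hg'
    obtain ⟨hα0, hα2⟩ := hα
    rcases (gen_iff α p q k).mp hg with ⟨e1, e2⟩
    rcases (gen_iff α' p q k).mp hg' with ⟨e1', e2'⟩
    have hcs : Real.sin α^2 + Real.cos α^2 = 1 := Real.sin_sq_add_cos_sq α
    have hcs' : Real.sin α'^2 + Real.cos α'^2 = 1 := Real.sin_sq_add_cos_sq α'
    have hpq : (0:ℝ) < (p:ℝ)^2 + (q:ℝ)^2 := by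
      have := gen_pq_pos hg
      have : (0:ℤ) < p^2+q^2 := this
      exact_mod_cast this
    -- imaginary parts agree
    have hy2 : ((p:ℝ)*Real.sin α + q*Real.cos α)^2 = ((p:ℝ)*Real.sin α' + q*Real.cos α')^2 := by
      have l1 : ((p:ℝ)*Real.cos α - q*Real.sin α)^2 + ((p:ℝ)*Real.sin α + q*Real.cos α)^2
          = (p:ℝ)^2 + q^2 := by linear_combination ((p:ℝ)^2+(q:ℝ)^2) * hcs
      have l2 : ((p:ℝ)*Real.cos α' - q*Real.sin α')^2 + ((p:ℝ)*Real.sin α' + q*Real.cos α')^2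
          = (p:ℝ)^2 + q^2 := by linear_combination ((p:ℝ)^2+(q:ℝ)^2) * hcs'
      rw [e1] at l1; rw [e1'] at l2
      linarith
    have hy : (p:ℝ)*Real.sin α + q*Real.cos α = (p:ℝ)*Real.sin α' + q*Real.cos α' := by
      have hfac : (((p:ℝ)*Real.sin α + q*Real.cos α) - ((p:ℝ)*Real.sin α' + q*Real.cos α'))
          * (((p:ℝ)*Real.sin α + q*Real.cos α) + ((p:ℝ)*Real.sin α' + q*Real.cos α')) = 0 := by
        linear_combination hy2
      rcases mul_eq_zero.mp hfac with h | h
      · linarith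
      · linarith
    -- cos and sin agree
    have hc : Real.cos α = Real.cos α' := by
      have hE : ((p:ℝ)^2+q^2) * (Real.cos α - Real.cos α') = 0 := by
        linear_combination (p:ℝ)*e1 - (p:ℝ)*e1' + (q:ℝ)*hy
      rcases mul_eq_zero.mp hE with h | h
      · linarith
      · linarith
    have hs : Real.sin α = Real.sin α' := by
      have hE : ((p:ℝ)^2+q^2) * (Real.sin α - Real.sin α') = 0 := by
        linear_combination (p:ℝ)*hy - (q:ℝ)*e1 + (q:ℝ)*e1'
      rcases mul_eq_zero.mp hE with h | h
      · linarith
      · linarith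
    -- exp equality
    have hexp : Complex.exp (α * Complex.I) = Complex.exp (α' * Complex.I) := by
      rw [show ((α : ℂ) * Complex.I) = (α : ℝ) * Complex.I from rfl,
          show ((α' : ℂ) * Complex.I) = (α' : ℝ) * Complex.I from rfl,
          Complex.exp_mul_I, Complex.exp_mul_I]
      simp [Complex.ext_iff, Complex.cos_ofReal_re, Complex.sin_ofReal_re, hc, hs]
    obtain ⟨n, hn⟩ := Complex.exp_eq_exp_iff_exists_int.mp hexp
    have hpi := Real.pi_pos
    have hab : α = α' + (n:ℝ) * (2*π) := by
      have h := congrArg Complex.im hn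
      simp at h
      linarith [h]
    have hn0 : n = 0 := by
      by_contra hne
      rcases lt_or_gt_of_ne hne with hlt | hgt
      · have : (n:ℝ) ≤ -1 := by exact_mod_cast (by omega : n ≤ -1)
        nlinarith
      · have : (1:ℝ) ≤ n := by exact_mod_cast (by omega : 1 ≤ n)
        nlinarith
    rw [hn0] at hab
    simpa using hab
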